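/- arXiv:2111.02746 — 7 statements merged into one kernel-verified Lean document; each statement's English description precedes it below -/
import Mathlib

section
/- Let n ≥ 2 and let k = min{ j ∈ ℤ⁺ : 3^j ≥ √n }. Then the values a³ + a for 1 ≤ a ≤ n are pairwise distinct modulo 3^{2k}; that is, for all integers 1 ≤ a < b ≤ n one has b³ + b ≢ a³ + a (mod 3^{2k}). -/
/-! Since `(b³ + b) - (a³ + a) = (b - a)(a² + ab + b² + 1)` and the second factor is never
divisible by `3`, a congruence of the values modulo `3 ^ (2k)` forces `b ≡ a`; but
`0 < b - a < n ≤ 3 ^ (2k)`. -/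

theorem ZMod.sq_add_mul_add_sq_add_one_ne_zero : ∀ x y : ZMod 3, x ^ 2 + x * y + y ^ 2 + 1 ≠ 0 := by
  decide

theorem Int.ModEq.of_cube_add_self {m : ℕ} {x y : ℤ} (h : x ^ 3 + x ≡ y ^ 3 + y [ZMOD 3 ^ m]) :
    x ≡ y [ZMOD 3 ^ m] := by
  rw [Int.modEq_iff_dvd] at h ⊢
  have hfactor : y ^ 3 + y - (x ^ 3 + x) = (y - x) * (x ^ 2 + x * y + y ^ 2 + 1) := by ring
  have hcoprime : IsCoprime ((3 : ℤ) ^ m) (x ^ 2 + x * y + y ^ 2 + 1) := by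
    refine (Int.prime_three.coprime_iff_not_dvd.mpr ?_).pow_left
    intro hdvd
    have hzero := (ZMod.intCast_zmod_eq_zero_iff_dvd _ 3).mpr hdvd
    push_cast at hzero
    exact ZMod.sq_add_mul_add_sq_add_one_ne_zero _ _ hzero
  exact hcoprime.dvd_of_dvd_mul_right (hfactor ▸ h)

theorem Nat.ModEq.of_cube_add_self {m a b : ℕ} (h : a ^ 3 + a ≡ b ^ 3 + b [MOD 3 ^ m]) :
    a ≡ b [MOD 3 ^ m] := by
  rw [← Int.natCast_modEq_iff] at h ⊢
  push_cast at h ⊢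
  exact h.of_cube_add_self

theorem Nat.le_pow_two_mul_of_sqrt_le_pow {n c k : ℕ} (h : √(n : ℝ) ≤ (c : ℝ) ^ k) :
    n ≤ c ^ (2 * k) := by
  rw [Real.sqrt_le_left (by positivity), ← pow_mul, mul_comm] at h
  exact_mod_cast h

theorem distinct_mod_three_pow_general (n : ℕ) (k : ℕ)
    (hk : IsLeast {j : ℕ | 1 ≤ j ∧ Real.sqrt n ≤ 3 ^ j} k) :
    ∀ a b : ℕ, 1 ≤ a → a < b → b ≤ n →
      ¬ (b ^ 3 + b ≡ a ^ 3 + a [MOD 3 ^ (2 * k)]) := by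
  intro a b ha hab hbn h
  have hn : n ≤ 3 ^ (2 * k) := Nat.le_pow_two_mul_of_sqrt_le_pow (by exact_mod_cast hk.1.2)
  have hmod := h.of_cube_add_self
  generalize 3 ^ (2 * k) = N at hmod hn
  have hba : b = a := hmod.eq_of_abs_lt <| by rw [abs_lt]; omega
  omega

/-- Let `n ≥ 2` and let `k` be the least positive integer `j` with `3^j ≥ √n`.  Then the
values `a³ + a` for `1 ≤ a ≤ n` are pairwise distinct modulo `3^(2k)`. -/
theorem distinct_mod_three_pow (n : ℕ) (hn : 2 ≤ n) (k : ℕ)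
    (hk : IsLeast {j : ℕ | 1 ≤ j ∧ Real.sqrt n ≤ 3 ^ j} k) :
    ∀ a b : ℕ, 1 ≤ a → a < b → b ≤ n →
      ¬ (b ^ 3 + b ≡ a ^ 3 + a [MOD 3 ^ (2 * k)]) :=
  distinct_mod_three_pow_general n k hk
end

section
/- Suppose m = δ·p^r, where δ ≥ 4 is an integer, p ≥ 5 is a prime, r is a positive integer and p ∤ δ. If n is a positive integer with p^{2r} + δ²·p ≤ n, then there exist integers 1 ≤ a < b ≤ n such that b³ + b ≡ a³ + a (mod m²). -/
/-!
With `b = a + d` one has `b³ + b - (a³ + a) = d (3a² + 3da + d² + 1)`. Taking `d = δ² e` with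
`1 ≤ e ≤ p` makes `δ² ∣ d`, so it suffices that `p^(2r)` divides the quadratic factor for some
`1 ≤ a ≤ p^(2r)`. Its discriminant in `a` is `-3 (d² + 4)`; writing `-3 = u² + v²` in `𝔽_p`
produces a residue of `d` modulo `p` for which the quadratic has a simple root mod `p`, and
Hensel's lemma lifts it to `ℤ_p`, hence to `ℤ/p^(2r)`.
-/

open Polynomial

theorem ZMod.exists_one_le_le_natCast_eq {N : ℕ} [NeZero N] (x : ZMod N) :
    ∃ a : ℕ, 1 ≤ a ∧ a ≤ N ∧ (a : ZMod N) = x :=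
  ⟨(x - 1).val + 1, by omega, (x - 1).val_lt, by simp⟩

theorem PadicInt.toZMod_eq_zero_iff_norm_lt_one {p : ℕ} [Fact p.Prime] (z : ℤ_[p]) :
    toZMod z = 0 ↔ ‖z‖ < 1 := by
  rw [← RingHom.mem_ker, ker_toZMod, IsLocalRing.mem_maximalIdeal, mem_nonunits]

theorem exists_aeval_zmod_pow_eq_zero_of_simple_root {p : ℕ} [Fact p.Prime] {F : ℤ[X]}
    {x₀ : ZMod p} (hroot : aeval x₀ F = 0) (hsimple : aeval x₀ (derivative F) ≠ 0) (k : ℕ) :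
    ∃ x : ZMod (p ^ k), aeval x F = 0 := by
  obtain ⟨a, rfl⟩ := ZMod.ringHom_surjective PadicInt.toZMod x₀
  rw [← PadicInt.toZMod.toIntAlgHom_apply, aeval_algHom_apply] at hroot hsimple
  have hsmall : ‖aeval a F‖ < 1 := (PadicInt.toZMod_eq_zero_iff_norm_lt_one _).1 hroot
  have hunit : ‖aeval a (derivative F)‖ = 1 :=
    le_antisymm (PadicInt.norm_le_one _)
      (not_lt.1 (mt (PadicInt.toZMod_eq_zero_iff_norm_lt_one _).2 hsimple))
  obtain ⟨z, hz, -⟩ := hensels_lemma (F := F) (a := a) (by rwa [hunit, one_pow])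
  refine ⟨PadicInt.toZModPow k z, ?_⟩
  rw [← (PadicInt.toZModPow k).toIntAlgHom_apply, aeval_algHom_apply, hz, map_zero]

theorem exists_simple_root_of_sq_add_sq_eq_neg_three {K : Type*} [Field K] (h6 : (6 : K) ≠ 0)
    {u v : K} (huv : u ^ 2 + v ^ 2 = -3) :
    ∃ t x : K, 3 * x ^ 2 + 3 * t * x + t ^ 2 + 1 = 0 ∧ 6 * x + 3 * t ≠ 0 := by
  wlog hv : v ≠ 0 generalizing u v
  · refine this (u := v) (v := u) (by rw [← huv]; ring) fun hu => ?_
    rw [not_not.1 hv, hu] at huv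
    exact h6 (by linear_combination 2 * huv)
  -- `v ^ 2 * (3 * x ^ 2 + 3 * t * x + t ^ 2 + 1) = u ^ 2 + v ^ 2 + 3`
  refine ⟨2 * u / v, (1 - u) / v, ?_, ?_⟩
  · field_simp
    linear_combination huv
  · have hderiv : 6 * ((1 - u) / v) + 3 * (2 * u / v) = 6 / v := by
      field_simp
      ring
    rw [hderiv]
    exact div_ne_zero h6 hv

noncomputable def collisionQuadratic (d : ℤ) : ℤ[X] := C 3 * X ^ 2 + C (3 * d) * X + C (d ^ 2 + 1)

@[simp]
theorem aeval_collisionQuadratic {R : Type*} [CommRing R] (d : ℤ) (x : R) :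
    aeval x (collisionQuadratic d) = 3 * x ^ 2 + 3 * d * x + d ^ 2 + 1 := by
  simp [collisionQuadratic, map_ofNat, add_assoc]

@[simp]
theorem aeval_derivative_collisionQuadratic {R : Type*} [CommRing R] (d : ℤ) (x : R) :
    aeval x (derivative (collisionQuadratic d)) = 6 * x + 3 * d := by
  simp only [collisionQuadratic, derivative_add, derivative_C_mul_X_pow, derivative_C_mul_X,
    derivative_C, add_zero]
  simp [map_ofNat]

theorem add_pow_three_add_modEq {M N a d : ℕ} (hd : M ∣ d)
    (ha : N ∣ 3 * a ^ 2 + 3 * d * a + d ^ 2 + 1) :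
    (a + d) ^ 3 + (a + d) ≡ a ^ 3 + a [MOD M * N] := by
  have hdiff : (a + d) ^ 3 + (a + d) = a ^ 3 + a + d * (3 * a ^ 2 + 3 * d * a + d ^ 2 + 1) := by
    ring
  rw [hdiff]
  simpa using (Nat.modEq_zero_iff_dvd.2 (mul_dvd_mul hd ha)).add_left (a ^ 3 + a)

theorem collision_case_vi_aux_general (m n δ r p : ℕ)
    (hp : p.Prime) (hp5 : 5 ≤ p) (hpδ : ¬ p ∣ δ)
    (hm : m = δ * p ^ r) (hle : p ^ (2 * r) + δ ^ 2 * p ≤ n) :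
    ∃ a b : ℕ, 1 ≤ a ∧ a < b ∧ b ≤ n ∧ b ^ 3 + b ≡ a ^ 3 + a [MOD m ^ 2] := by
  have := Fact.mk hp
  have h6 : (6 : ZMod p) ≠ 0 := by
    rw [Ne, ← Nat.cast_ofNat, ZMod.natCast_eq_zero_iff]
    intro h
    have hp6 := Nat.le_of_dvd (by norm_num) h
    interval_cases p <;> norm_num at *
  obtain ⟨u, v, huv⟩ := ZMod.sq_add_sq p (-3)
  obtain ⟨t, x₀, hroot, hsimple⟩ := exists_simple_root_of_sq_add_sq_eq_neg_three h6 huv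
  have hδ : (δ : ZMod p) ≠ 0 := by rwa [Ne, ZMod.natCast_eq_zero_iff]
  obtain ⟨e, he1, hep, he⟩ := ZMod.exists_one_le_le_natCast_eq (t / (δ : ZMod p) ^ 2)
  have hd : (δ : ZMod p) ^ 2 * e = t := by
    rw [he]
    field_simp
  obtain ⟨x, hx⟩ := exists_aeval_zmod_pow_eq_zero_of_simple_root
    (F := collisionQuadratic (δ ^ 2 * e : ℕ)) (x₀ := x₀) (by simpa [hd]) (by simpa [hd]) (2 * r)
  obtain ⟨a, ha1, haP, rfl⟩ := ZMod.exists_one_le_le_natCast_eq x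
  refine ⟨a, a + δ ^ 2 * e, ha1, ?_, ?_, ?_⟩
  · have hδ0 : δ ≠ 0 := by rintro rfl; exact hpδ (dvd_zero p)
    have : 0 < δ ^ 2 * e := by positivity
    omega
  · exact le_trans (by gcongr) hle
  · rw [hm, mul_pow, ← pow_mul, mul_comm r 2]
    refine add_pow_three_add_modEq (dvd_mul_right _ _) ((ZMod.natCast_eq_zero_iff _ _).1 ?_)
    simpa using hx

/-- Suppose `m = δ·p^r` with `δ ≥ 4`, `p ≥ 5` prime, `r ≥ 1` and `p ∤ δ`.  If
`p^(2r) + δ²·p ≤ n` then there exist `1 ≤ a < b ≤ n` with `b³ + b ≡ a³ + a (mod m²)`. -/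
theorem collision_case_vi_aux (m n δ r p : ℕ) (hn : 0 < n)
    (hp : p.Prime) (hp5 : 5 ≤ p) (hδ : 4 ≤ δ) (hr : 1 ≤ r) (hpδ : ¬ p ∣ δ)
    (hm : m = δ * p ^ r) (hle : p ^ (2 * r) + δ ^ 2 * p ≤ n) :
    ∃ a b : ℕ, 1 ≤ a ∧ a < b ∧ b ≤ n ∧ b ^ 3 + b ≡ a ^ 3 + a [MOD m ^ 2] :=
  collision_case_vi_aux_general m n δ r p hp hp5 hpδ hm hle
end

section
/- Let n ≥ 14 and let k = min{ j ∈ ℤ⁺ : 3^j ≥ √n }. Suppose m satisfies √n < m < 3^k and m = 2^r·3^s·7 or m = 2^r·3^s·5·7 for some nonnegative integers r, s. Then there exist integers 1 ≤ a < b ≤ n such that b³ + b ≡ a³ + a (mod m²). -/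
/-!
Write `m = 7w`. For `b = a + t` we have `b³ + b = a³ + a + t (3a² + 3at + t² + 1)`, so it suffices to
find `t` with `w² ∣ t` and `a` with `49 ∣ 3a² + 3at + t² + 1`. A finite check modulo 49 shows that
`t = j w²` with `j ≤ 3` and some `1 ≤ a ≤ 49` always works. Then `b ≤ 49 + 3w²`, and this is at most `n`
once `w ≥ 5`, because minimality of `k` gives `3^(k-1) < √n`, hence `m² < 9^k < 9n`. The multipliers
`w ≤ 4` are settled by explicit pairs.
-/

theorem add_pow_three_add_self (a t : ℕ) :
    (a + t) ^ 3 + (a + t) = a ^ 3 + a + t * (3 * a ^ 2 + 3 * a * t + t ^ 2 + 1) := by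
  ring

theorem exists_quadratic_eq_zero_zmod_49 :
    ∀ v : ZMod 49, ∃ a : ZMod 49, ∃ j ∈ ({1, 2, 3} : Finset (ZMod 49)),
      3 * a ^ 2 + 3 * a * (j * v ^ 2) + (j * v ^ 2) ^ 2 + 1 = 0 := by
  decide

theorem exists_forty_nine_dvd_quadratic (w : ℕ) :
    ∃ a j : ℕ, 1 ≤ a ∧ a ≤ 49 ∧ 1 ≤ j ∧ j ≤ 3 ∧
      49 ∣ 3 * a ^ 2 + 3 * a * (j * w ^ 2) + (j * w ^ 2) ^ 2 + 1 := by
  obtain ⟨a, j, hj, h⟩ := exists_quadratic_eq_zero_zmod_49 w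
  have hj' : 1 ≤ j.val ∧ j.val ≤ 3 := by
    simp only [Finset.mem_insert, Finset.mem_singleton] at hj
    rcases hj with rfl | rfl | rfl <;> decide
  -- `(a - 1).val + 1` is the representative of `a` in `[1, 49]`
  refine ⟨(a - 1).val + 1, j.val, by omega, ZMod.val_lt (a - 1), hj'.1, hj'.2, ?_⟩
  rw [← ZMod.natCast_eq_zero_iff]
  push_cast
  simpa using h

theorem add_pow_three_add_self_modEq {a t w : ℕ} (ht : w ^ 2 ∣ t)
    (hQ : 49 ∣ 3 * a ^ 2 + 3 * a * t + t ^ 2 + 1) :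
    (a + t) ^ 3 + (a + t) ≡ a ^ 3 + a [MOD (7 * w) ^ 2] := by
  have hdvd : (7 * w) ^ 2 ∣ t * (3 * a ^ 2 + 3 * a * t + t ^ 2 + 1) := by
    rw [show (7 * w) ^ 2 = w ^ 2 * 49 by ring]
    exact mul_dvd_mul ht hQ
  rw [add_pow_three_add_self]
  simpa using (Nat.modEq_zero_iff_dvd.2 hdvd).add_left (a ^ 3 + a)

theorem exists_modEq_sq_seven_mul_of_five_le {w n : ℕ} (hw : 5 ≤ w) (h : (7 * w) ^ 2 < 9 * n) :
    ∃ a b : ℕ, 1 ≤ a ∧ a < b ∧ b ≤ n ∧ b ^ 3 + b ≡ a ^ 3 + a [MOD (7 * w) ^ 2] := by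
  obtain ⟨a, j, ha, ha49, hj, hj3, hQ⟩ := exists_forty_nine_dvd_quadratic w
  have ht : 0 < j * w ^ 2 := by positivity
  refine ⟨a, a + j * w ^ 2, ha, by omega, ?_,
    add_pow_three_add_self_modEq (Dvd.intro_left j rfl) hQ⟩
  nlinarith

theorem exists_modEq_sq_seven_mul {w n : ℕ} (hw : 1 ≤ w) (hn : 9 < n) (h : (7 * w) ^ 2 < 9 * n) :
    ∃ a b : ℕ, 1 ≤ a ∧ a < b ∧ b ≤ n ∧ b ^ 3 + b ≡ a ^ 3 + a [MOD (7 * w) ^ 2] := by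
  rcases lt_or_ge w 5 with hw5 | hw5
  · interval_cases w
    · exact ⟨3, 8, by norm_num, by norm_num, by omega, by decide⟩
    · exact ⟨3, 10, by norm_num, by norm_num, by omega, by decide⟩
    · exact ⟨8, 17, by norm_num, by norm_num, by omega, by decide⟩
    · exact ⟨10, 17, by norm_num, by norm_num, by omega, by decide⟩
  · exact exists_modEq_sq_seven_mul_of_five_le hw5 h

theorem nine_pow_lt_of_isLeast {n k : ℕ} (hk : IsLeast {j : ℕ | 1 ≤ j ∧ Real.sqrt n ≤ 3 ^ j} k)
    (hk2 : 2 ≤ k) : 9 ^ k < 9 * n := by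
  have hlt : (3 : ℝ) ^ (k - 1) < Real.sqrt n := by
    by_contra! h
    have := hk.2 ⟨by omega, h⟩
    omega
  have hpred : 9 ^ (k - 1) < n := by
    have := (Real.lt_sqrt (by positivity)).1 hlt
    rw [← pow_mul, mul_comm, pow_mul] at this
    norm_num at this
    exact_mod_cast this
  calc 9 ^ k = 9 * 9 ^ (k - 1) := by rw [← pow_succ', Nat.sub_add_cancel (by omega)]
    _ < 9 * n := by omega

theorem collision_case_v_general (n : ℕ) (k : ℕ)
    (hk : IsLeast {j : ℕ | 1 ≤ j ∧ Real.sqrt n ≤ 3 ^ j} k)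
    (m r s : ℕ) (hm : m = 2 ^ r * 3 ^ s * 7 ∨ m = 2 ^ r * 3 ^ s * 5 * 7)
    (hm2 : m < 3 ^ k) :
    ∃ a b : ℕ, 1 ≤ a ∧ a < b ∧ b ≤ n ∧ b ^ 3 + b ≡ a ^ 3 + a [MOD m ^ 2] := by
  obtain ⟨w, hw, rfl⟩ : ∃ w, 1 ≤ w ∧ m = 7 * w := by
    rcases hm with rfl | rfl
    · exact ⟨2 ^ r * 3 ^ s, Nat.one_le_iff_ne_zero.2 (by positivity), by ring⟩
    · exact ⟨2 ^ r * 3 ^ s * 5, Nat.one_le_iff_ne_zero.2 (by positivity), by ring⟩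
  have hk2 : 2 ≤ k := by
    by_contra! hk1
    have : 3 ^ k ≤ 3 ^ 1 := Nat.pow_le_pow_right (by norm_num) (by omega)
    omega
  have h9n := nine_pow_lt_of_isLeast hk hk2
  have h81 : 9 ^ 2 ≤ 9 ^ k := Nat.pow_le_pow_right (by norm_num) hk2
  have hsq : (7 * w) ^ 2 < 9 ^ k := by
    calc (7 * w) ^ 2 < (3 ^ k) ^ 2 := Nat.pow_lt_pow_left hm2 two_ne_zero
      _ = 9 ^ k := by rw [← pow_mul, mul_comm, pow_mul]; norm_num
  exact exists_modEq_sq_seven_mul hw (by omega) (by omega)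

/-- Case (v): `n ≥ 14`, `√n < m < 3^k`, and `m = 2^r·3^s·7` or `m = 2^r·3^s·5·7` for some
`r, s ≥ 0`.  Then there exist `1 ≤ a < b ≤ n` with `b³ + b ≡ a³ + a (mod m²)`. -/
theorem collision_case_v (n : ℕ) (hn : 14 ≤ n) (k : ℕ)
    (hk : IsLeast {j : ℕ | 1 ≤ j ∧ Real.sqrt n ≤ 3 ^ j} k)
    (m r s : ℕ) (hm : m = 2 ^ r * 3 ^ s * 7 ∨ m = 2 ^ r * 3 ^ s * 5 * 7)
    (hm1 : Real.sqrt n < m) (hm2 : m < 3 ^ k) :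
    ∃ a b : ℕ, 1 ≤ a ∧ a < b ∧ b ≤ n ∧ b ^ 3 + b ≡ a ^ 3 + a [MOD m ^ 2] :=
  collision_case_v_general n k hk m r s hm hm2
end

section
/- Suppose m = 2^r·t, where r is a positive integer and t is an odd positive integer. If n is a positive integer with 2^{2r} + t² ≤ n, then there exist integers 1 ≤ a < b ≤ n such that b³ + b ≡ a³ + a (mod m²). -/
/-! With `b = a + t²` one has `b³ + b - (a³ + a) = t² (3a² + 3t²a + t⁴ + 1)`, so it suffices to find
`1 ≤ a ≤ 2^(2r)` with `2^(2r)` dividing the quadratic factor. For odd `t` that factor is even at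
`a = 0` and its derivative `6a + 3t²` is odd, so Hensel lifting gives a root modulo every power
of `2`, and any root may be shifted into `[1, 2^(2r)]`. -/

open Polynomial

theorem Polynomial.exists_pow_succ_dvd_eval_of_isCoprime_derivative {R : Type*} [CommRing R]
    (f : R[X]) {p a : R} (hfa : p ∣ f.eval a) (hp : IsCoprime p (f.derivative.eval a))
    (k : ℕ) : ∃ b, p ∣ b - a ∧ p ^ (k + 1) ∣ f.eval b := by
  induction k with
  | zero => exact ⟨a, by simp, by simpa using hfa⟩
  | succ k ih =>
    obtain ⟨b, hba, u, hu⟩ := ih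
    have hpb : IsCoprime p (f.derivative.eval b) := by
      obtain ⟨c, hc⟩ := hba.trans (sub_dvd_eval_sub b a f.derivative)
      rw [← sub_add_cancel (f.derivative.eval b) (f.derivative.eval a), hc, add_comm]
      exact hp.add_mul_left_right c
    obtain ⟨x, y, hxy⟩ := hpb
    obtain ⟨s, hs⟩ := binomExpansion f b (-(p ^ (k + 1) * u * y))
    refine ⟨b + -(p ^ (k + 1) * u * y), ?_, ?_⟩
    · rw [add_sub_right_comm]
      exact dvd_add hba (Dvd.intro (-(p ^ k * u * y)) (by ring))
    · rw [hs, hu]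
      exact ⟨u * x + s * p ^ k * u ^ 2 * y ^ 2, by linear_combination -(p ^ (k + 1) * u) * hxy⟩

theorem exists_two_pow_dvd_quadratic_of_odd {t : ℤ} (ht : Odd t) (k : ℕ) :
    ∃ a : ℤ, 2 ^ k ∣ 3 * a ^ 2 + 3 * t ^ 2 * a + t ^ 4 + 1 := by
  set f : ℤ[X] := C 3 * X ^ 2 + C (3 * t ^ 2) * X + C (t ^ 4 + 1)
  have hf : ∀ a, f.eval a = 3 * a ^ 2 + 3 * t ^ 2 * a + t ^ 4 + 1 := fun a => by
    simp [f, add_assoc]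
  have hf' : f.derivative.eval 0 = 3 * t ^ 2 := by
    simp only [f, derivative_add, derivative_C]
    simp
  have hf0 : 2 ∣ f.eval 0 := by simpa [hf, even_iff_two_dvd] using (ht.pow (n := 4)).add_one
  have hcop : IsCoprime 2 (f.derivative.eval 0) := by
    rw [hf', Int.isCoprime_two_left]
    exact Odd.mul (by decide) ht.pow
  obtain ⟨a, -, ha⟩ := f.exists_pow_succ_dvd_eval_of_isCoprime_derivative hf0 hcop k
  exact ⟨a, hf a ▸ (pow_dvd_pow 2 k.le_succ).trans ha⟩

theorem Int.exists_natCast_mem_Icc_modEq {N : ℕ} (hN : 0 < N) (a : ℤ) :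
    ∃ A : ℕ, A ∈ Set.Icc 1 N ∧ (A : ℤ) ≡ a [ZMOD N] := by
  have hN' : (0 : ℤ) < N := by exact_mod_cast hN
  have h0 := Int.emod_nonneg (a - 1) hN'.ne'
  have hlt := Int.emod_lt_of_pos (a - 1) hN'
  refine ⟨((a - 1) % N + 1).toNat, ⟨by omega, by omega⟩, ?_⟩
  rw [Int.toNat_of_nonneg (by omega)]
  simpa using (Int.mod_modEq (a - 1) N).add_right 1

theorem exists_mem_Icc_two_pow_dvd_quadratic_of_odd {t : ℕ} (ht : Odd t) (k : ℕ) :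
    ∃ a ∈ Set.Icc 1 (2 ^ k), 2 ^ k ∣ 3 * a ^ 2 + 3 * t ^ 2 * a + t ^ 4 + 1 := by
  obtain ⟨a, ha⟩ := exists_two_pow_dvd_quadratic_of_odd ((Int.odd_coe_nat t).mpr ht) k
  obtain ⟨A, hA, hAa⟩ := Int.exists_natCast_mem_Icc_modEq (Nat.two_pow_pos k) a
  refine ⟨A, hA, ?_⟩
  push_cast at hAa
  have hcong : (3 * A ^ 2 + 3 * t ^ 2 * A + t ^ 4 + 1 : ℤ)
      ≡ 3 * a ^ 2 + 3 * t ^ 2 * a + t ^ 4 + 1 [ZMOD 2 ^ k] := by gcongr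
  exact_mod_cast Int.modEq_zero_iff_dvd.mp (hcong.trans (Int.modEq_zero_iff_dvd.mpr ha))

theorem collision_two_pow_aux_general (m n r t : ℕ) (ht : Odd t) (hm : m = 2 ^ r * t)
    (hle : 2 ^ (2 * r) + t ^ 2 ≤ n) :
    ∃ a b : ℕ, 1 ≤ a ∧ a < b ∧ b ≤ n ∧ b ^ 3 + b ≡ a ^ 3 + a [MOD m ^ 2] := by
  obtain ⟨a, ⟨ha1, ha⟩, hdvd⟩ := exists_mem_Icc_two_pow_dvd_quadratic_of_odd ht (2 * r)
  have hm2 : m ^ 2 ∣ t ^ 2 * (3 * a ^ 2 + 3 * t ^ 2 * a + t ^ 4 + 1) := by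
    rw [hm, mul_pow, ← pow_mul, mul_comm r, mul_comm]
    exact mul_dvd_mul_left _ hdvd
  refine ⟨a, a + t ^ 2, ha1, Nat.lt_add_of_pos_right (pow_pos ht.pos 2), by omega, ?_⟩
  calc (a + t ^ 2) ^ 3 + (a + t ^ 2)
      = a ^ 3 + a + t ^ 2 * (3 * a ^ 2 + 3 * t ^ 2 * a + t ^ 4 + 1) := by ring
    _ ≡ a ^ 3 + a + 0 [MOD m ^ 2] := (Nat.modEq_zero_iff_dvd.mpr hm2).add_left _
    _ = a ^ 3 + a := add_zero _

/-- Suppose `m = 2^r·t` with `r ≥ 1` and `t` an odd positive integer.  If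
`2^(2r) + t² ≤ n` then there exist `1 ≤ a < b ≤ n` with `b³ + b ≡ a³ + a (mod m²)`. -/
theorem collision_two_pow_aux (m n r t : ℕ) (hn : 0 < n) (hr : 1 ≤ r)
    (ht0 : 0 < t) (ht : Odd t) (hm : m = 2 ^ r * t)
    (hle : 2 ^ (2 * r) + t ^ 2 ≤ n) :
    ∃ a b : ℕ, 1 ≤ a ∧ a < b ∧ b ≤ n ∧ b ^ 3 + b ≡ a ^ 3 + a [MOD m ^ 2] :=
  collision_two_pow_aux_general m n r t ht hm hle
end

section
/- Let n ≥ 57 and let k = min{ j ∈ ℤ⁺ : 3^j ≥ √n }. Suppose m satisfies √n < m < 3^k and m = 2^r·3^s·5 for some nonnegative integers r, s. Then there exist integers 1 ≤ a < b ≤ n such that b³ + b ≡ a³ + a (mod m²). -/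
/-!
Since `b³ + b - (a³ + a) = (b - a)(a² + ab + b² + 1)`, writing `m = 5c` with `c = 2^r 3^s` prime
to `5` it suffices to take `b = a + 2c²` with `25 ∣ a² + ab + b² + 1`; a check of the residues of
`c` mod `25` shows that some `1 ≤ a ≤ 18` does this. Minimality of `k` gives `3^k < 3√n`, hence
`25c² = m² < 9n`, and `3^k > m ≥ 10` forces `n > 81`; together these give `b ≤ n`.
-/

theorem Nat.add_cube_add_self_modEq {a d x y : ℕ} (hx : x ∣ d)
    (hy : y ∣ a ^ 2 + a * (a + d) + (a + d) ^ 2 + 1) :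
    (a + d) ^ 3 + (a + d) ≡ a ^ 3 + a [MOD x * y] := by
  have hfactor : (a + d) ^ 3 + (a + d) =
      a ^ 3 + a + d * (a ^ 2 + a * (a + d) + (a + d) ^ 2 + 1) := by
    ring
  have hzero : d * (a ^ 2 + a * (a + d) + (a + d) ^ 2 + 1) ≡ 0 [MOD x * y] :=
    Nat.modEq_zero_iff_dvd.mpr (mul_dvd_mul hx hy)
  simpa [hfactor] using (Nat.ModEq.refl (a ^ 3 + a)).add hzero

theorem exists_le_eighteen_twentyfive_dvd {c : ℕ} (hc : ¬ 5 ∣ c) :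
    ∃ a, 1 ≤ a ∧ a ≤ 18 ∧ 25 ∣ a ^ 2 + a * (a + 2 * c ^ 2) + (a + 2 * c ^ 2) ^ 2 + 1 := by
  have table : ∀ v < 25, v % 5 ≠ 0 → ∃ a < 19, 1 ≤ a ∧
      (a ^ 2 + a * (a + 2 * v ^ 2) + (a + 2 * v ^ 2) ^ 2 + 1) % 25 = 0 := by
    decide
  obtain ⟨a, ha19, ha1, ha⟩ := table (c % 25) (Nat.mod_lt _ (by norm_num)) (by omega)
  refine ⟨a, ha1, by omega, ?_⟩
  rw [← ZMod.natCast_eq_zero_iff]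
  rw [← Nat.dvd_iff_mod_eq_zero, ← ZMod.natCast_eq_zero_iff] at ha
  push_cast at ha ⊢
  simpa using ha

theorem not_five_dvd_two_pow_mul_three_pow (r s : ℕ) : ¬ 5 ∣ 2 ^ r * 3 ^ s := by
  intro h
  rcases Nat.prime_five.dvd_mul.mp h with h | h
  · exact absurd (Nat.prime_five.dvd_of_dvd_pow h) (by norm_num)
  · exact absurd (Nat.prime_five.dvd_of_dvd_pow h) (by norm_num)

theorem pow_lt_mul_of_isLeast {b x : ℝ} {k : ℕ} (hb : 0 < b) (hx : 1 < x)
    (hk : IsLeast {j : ℕ | 1 ≤ j ∧ x ≤ b ^ j} k) : b ^ k < b * x := by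
  obtain ⟨⟨hk1, -⟩, hmin⟩ := hk
  obtain ⟨j, rfl⟩ : ∃ j, k = j + 1 := ⟨k - 1, by omega⟩
  rw [pow_succ']
  refine mul_lt_mul_of_pos_left ?_ hb
  rcases Nat.eq_zero_or_pos j with rfl | hj
  · simpa using hx
  · by_contra! hle
    exact absurd (hmin ⟨hj, hle⟩) (by omega)

theorem sq_three_pow_lt_of_isLeast {n k : ℕ} (hn : 1 < n)
    (hk : IsLeast {j : ℕ | 1 ≤ j ∧ Real.sqrt n ≤ 3 ^ j} k) : (3 ^ k) ^ 2 < 9 * n := by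
  have hsqrt : 1 < Real.sqrt n := Real.lt_sqrt zero_le_one |>.mpr (by exact_mod_cast hn)
  have hlt : (3 : ℝ) ^ k < 3 * Real.sqrt n := pow_lt_mul_of_isLeast (by norm_num) hsqrt hk
  have hsq : ((3 : ℝ) ^ k) ^ 2 < 9 * (n : ℝ) := by
    calc ((3 : ℝ) ^ k) ^ 2 < (3 * Real.sqrt n) ^ 2 := by gcongr
      _ = 9 * (n : ℝ) := by rw [mul_pow, Real.sq_sqrt n.cast_nonneg]; norm_num
  exact_mod_cast hsq

/-- Case (iv): `n ≥ 57`, `√n < m < 3^k`, and `m = 2^r·3^s·5` for some `r, s ≥ 0`.  Then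
there exist `1 ≤ a < b ≤ n` with `b³ + b ≡ a³ + a (mod m²)`. -/
theorem collision_case_iv (n : ℕ) (hn : 57 ≤ n) (k : ℕ)
    (hk : IsLeast {j : ℕ | 1 ≤ j ∧ Real.sqrt n ≤ 3 ^ j} k)
    (m r s : ℕ) (hm : m = 2 ^ r * 3 ^ s * 5)
    (hm1 : Real.sqrt n < m) (hm2 : m < 3 ^ k) :
    ∃ a b : ℕ, 1 ≤ a ∧ a < b ∧ b ≤ n ∧ b ^ 3 + b ≡ a ^ 3 + a [MOD m ^ 2] := by
  set c := 2 ^ r * 3 ^ s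
  have hpow := sq_three_pow_lt_of_isLeast (by omega) hk
  have hm7 : 7 < m := by
    have h7 : (7 : ℝ) < Real.sqrt n :=
      Real.lt_sqrt (by norm_num) |>.mpr (by exact_mod_cast (by omega : 49 < n))
    exact_mod_cast h7.trans hm1
  have hk3 : 3 ≤ k := by
    have : 3 ^ 2 < 3 ^ k := by omega
    exact (Nat.pow_lt_pow_iff_right (by norm_num)).mp this
  have hn81 : 81 < n := by
    have : 3 ^ 3 ≤ 3 ^ k := Nat.pow_le_pow_right (by norm_num) hk3
    nlinarith
  have hc_sq : 25 * c ^ 2 < 9 * n := by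
    have := (Nat.pow_lt_pow_left hm2 two_ne_zero).trans hpow
    rw [hm] at this
    linarith
  obtain ⟨a, ha1, ha18, ha⟩ :=
    exists_le_eighteen_twentyfive_dvd (not_five_dvd_two_pow_mul_three_pow r s)
  refine ⟨a, a + 2 * c ^ 2, ha1, Nat.lt_add_of_pos_right (by positivity), by linarith, ?_⟩
  rw [hm, mul_pow]
  exact Nat.add_cube_add_self_modEq (Dvd.intro_left 2 rfl) ha
end

section
/- Let n ≥ 144 and let k = min{ j ∈ ℤ⁺ : 3^j ≥ √n }. Suppose m satisfies √n < m < 3^k and m = 2^r·3^s for some positive integers r, s. Then there exist integers 1 ≤ a < b ≤ n such that b³ + b ≡ a³ + a (mod m²). -/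
/-!
Put `d = 9^s` and `b = a + d`. Then `b³ + b - (a³ + a) = d · (3a² + 3ad + d² + 1)`, so it suffices
to find `a ≥ 1` with `a + d ≤ n` and `4^r ∣ 3a² + 3ad + d² + 1`. As `d` is odd, this quadratic
vanishes mod 2 at every `a` and has odd derivative `6a + 3d`, so Hensel lifting gives a root
`a < 4^r`. Minimality of `k` gives `n > 9^(k-1)`, and `2^r 3^s < 3^k` gives `2^r 3^(s-1) < 3^(k-1)`,
which for `r ≥ 2` is enough to fit `a + d < 4^r + 9^s` below `n`. For `r ≤ 1` the root `a = 1`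
works, since `d ≡ 1 (mod 4)`.
-/

theorem add_pow_three_add_self_modEq_of_dvd {M a d : ℕ}
    (h : M ∣ d * (3 * a ^ 2 + 3 * a * d + d ^ 2 + 1)) :
    (a + d) ^ 3 + (a + d) ≡ a ^ 3 + a [MOD M] := by
  have hid : (a + d) ^ 3 + (a + d) = a ^ 3 + a + d * (3 * a ^ 2 + 3 * a * d + d ^ 2 + 1) := by
    ring
  rw [hid]
  simpa using (Nat.modEq_zero_iff_dvd.mpr h).add_left (a ^ 3 + a)

theorem exists_lt_two_pow_dvd_quadratic {d : ℕ} (hd : Odd d) (t : ℕ) :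
    ∃ a, 1 ≤ a ∧ a < 2 ^ (t + 1) ∧ 2 ^ (t + 1) ∣ 3 * a ^ 2 + 3 * a * d + d ^ 2 + 1 := by
  induction t with
  | zero =>
    obtain ⟨c, rfl⟩ := hd
    exact ⟨1, le_rfl, by norm_num, 2 * c ^ 2 + 5 * c + 4, by ring⟩
  | succ t ih =>
    obtain ⟨a, ha, hlt, q, hq⟩ := ih
    have hpow : 2 ^ (t + 1 + 1) = 2 ^ (t + 1) * 2 := pow_succ 2 (t + 1)
    rcases Nat.even_or_odd q with ⟨q', rfl⟩ | hq_odd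
    · exact ⟨a, ha, by omega, q', by rw [hq, hpow]; ring⟩
    · obtain ⟨w, hw⟩ : Even (q + 3 * d + 6 * a + 3 * 2 ^ (t + 1)) := by
        have hqd : Even (q + 3 * d) := hq_odd.add_odd ((by decide : Odd 3).mul hd)
        have h6 : Even (6 * a) := (by decide : Even 6).mul_right a
        have h2 : Even (3 * 2 ^ (t + 1)) := (Nat.even_pow.mpr ⟨even_two, by omega⟩).mul_left 3
        exact (hqd.add h6).add h2
      refine ⟨a + 2 ^ (t + 1), by omega, by omega, w, ?_⟩
      calc 3 * (a + 2 ^ (t + 1)) ^ 2 + 3 * (a + 2 ^ (t + 1)) * d + d ^ 2 + 1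
          = (3 * a ^ 2 + 3 * a * d + d ^ 2 + 1)
              + 2 ^ (t + 1) * (3 * d + 6 * a + 3 * 2 ^ (t + 1)) := by ring
        _ = 2 ^ (t + 1) * (q + 3 * d + 6 * a + 3 * 2 ^ (t + 1)) := by rw [hq]; ring
        _ = 2 ^ (t + 1 + 1) * w := by rw [hw, hpow]; ring

theorem pow_sq_lt_of_isLeast {n b K : ℕ} (hK : 1 ≤ K)
    (hk : IsLeast {j : ℕ | 1 ≤ j ∧ Real.sqrt n ≤ b ^ j} (K + 1)) : (b ^ K) ^ 2 < n := by
  by_contra! h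
  have hmem : K ∈ {j : ℕ | 1 ≤ j ∧ Real.sqrt n ≤ b ^ j} :=
    ⟨hK, (Real.sqrt_le_left (by positivity)).mpr (by exact_mod_cast h)⟩
  have := hk.2 hmem
  omega

theorem sq_add_nine_mul_sq_le {X Y Z : ℕ} (hX : 4 ≤ X) (hZ : 1 ≤ Z) (h : X * Z < Y) :
    X ^ 2 + 9 * Z ^ 2 ≤ Y ^ 2 + 2 := by
  have hY : X * Z + 1 ≤ Y := h
  zify at hX hZ hY ⊢
  have hX9 : (0 : ℤ) ≤ X ^ 2 - 9 := by nlinarith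
  have hZ1 : (0 : ℤ) ≤ Z ^ 2 - 1 := by nlinarith
  -- `(XZ + 1)² + 2 - X² - 9Z² = (X² - 9)(Z² - 1) + 2XZ - 6`
  nlinarith [mul_nonneg hX9 hZ1, mul_le_mul hX hZ zero_le_one (by positivity),
    mul_self_le_mul_self (by positivity) hY]

theorem four_dvd_quadratic_one_of_odd {Z : ℕ} (hZ : Odd Z) :
    4 ∣ 3 * 1 ^ 2 + 3 * 1 * (9 * Z ^ 2) + (9 * Z ^ 2) ^ 2 + 1 := by
  obtain ⟨c, rfl⟩ := hZ
  -- `9 (2c + 1)² = 4y + 1`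
  let y := 9 * c ^ 2 + 9 * c + 2
  exact ⟨4 * y ^ 2 + 5 * y + 2, by ring⟩

theorem exists_two_pow_dvd_quadratic_of_lt {n r S K : ℕ} (hmK : 2 ^ r * 3 ^ S < 3 ^ K)
    (hn : (3 ^ K) ^ 2 < n) :
    ∃ a, 1 ≤ a ∧ a + 9 * (3 ^ S) ^ 2 ≤ n ∧
      2 ^ (2 * r) ∣ 3 * a ^ 2 + 3 * a * (9 * (3 ^ S) ^ 2) + (9 * (3 ^ S) ^ 2) ^ 2 + 1 := by
  have h3S : Odd (3 ^ S) := Odd.pow (by decide)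
  rcases Nat.lt_or_ge r 2 with hr | hr
  · have hSK : S < K := (Nat.pow_lt_pow_iff_right (by norm_num)).mp
      ((Nat.le_mul_of_pos_left _ (by positivity)).trans_lt hmK)
    have h9 : 9 * (3 ^ S) ^ 2 ≤ (3 ^ K) ^ 2 := by
      calc 9 * (3 ^ S) ^ 2 = (3 ^ (S + 1)) ^ 2 := by ring
        _ ≤ (3 ^ K) ^ 2 := by gcongr <;> omega
    exact ⟨1, le_rfl, by omega,
      (pow_dvd_pow 2 (by omega : 2 * r ≤ 2)).trans (four_dvd_quadratic_one_of_odd h3S)⟩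
  · obtain ⟨a, ha, hlt, hdvd⟩ :=
      exists_lt_two_pow_dvd_quadratic ((by decide : Odd 9).mul h3S.pow) (2 * r - 1)
    rw [show 2 * r - 1 + 1 = 2 * r by omega] at hlt hdvd
    have hX : 4 ≤ 2 ^ r := by
      calc 4 = 2 ^ 2 := by norm_num
        _ ≤ 2 ^ r := Nat.pow_le_pow_right (by norm_num) hr
    have hbound := sq_add_nine_mul_sq_le hX h3S.pos hmK
    rw [← pow_mul, mul_comm r] at hbound
    exact ⟨a, ha, by omega, hdvd⟩

theorem collision_case_iii_general (n : ℕ) (k : ℕ)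
    (hk : IsLeast {j : ℕ | 1 ≤ j ∧ Real.sqrt n ≤ 3 ^ j} k)
    (m r s : ℕ) (hs : 1 ≤ s) (hm : m = 2 ^ r * 3 ^ s)
    (hm2 : m < 3 ^ k) :
    ∃ a b : ℕ, 1 ≤ a ∧ a < b ∧ b ≤ n ∧ b ^ 3 + b ≡ a ^ 3 + a [MOD m ^ 2] := by
  subst hm
  obtain ⟨S, rfl⟩ : ∃ S, s = S + 1 := ⟨s - 1, by omega⟩
  obtain ⟨K, rfl⟩ : ∃ K, k = K + 1 := ⟨k - 1, by have := hk.1.1; omega⟩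
  have hmK : 2 ^ r * 3 ^ S < 3 ^ K := by
    rw [pow_succ, pow_succ, ← mul_assoc] at hm2
    exact Nat.lt_of_mul_lt_mul_right hm2
  have hK : 1 ≤ K := Nat.pos_of_ne_zero (by rintro rfl; simp at hmK)
  obtain ⟨a, ha, had, hdvd⟩ :=
    exists_two_pow_dvd_quadratic_of_lt hmK (pow_sq_lt_of_isLeast hK hk)
  have hm_sq : (2 ^ r * 3 ^ (S + 1)) ^ 2 = 9 * (3 ^ S) ^ 2 * 2 ^ (2 * r) := by
    rw [mul_comm 2 r, pow_mul]; ring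
  rw [hm_sq]
  exact ⟨a, a + 9 * (3 ^ S) ^ 2, ha, Nat.lt_add_of_pos_right (by positivity), had,
    add_pow_three_add_self_modEq_of_dvd (mul_dvd_mul_left _ hdvd)⟩

/-- Case (iii): `n ≥ 144`, `√n < m < 3^k`, and `m = 2^r·3^s` for some `r, s ≥ 1`.  Then
there exist `1 ≤ a < b ≤ n` with `b³ + b ≡ a³ + a (mod m²)`. -/
theorem collision_case_iii (n : ℕ) (hn : 144 ≤ n) (k : ℕ)
    (hk : IsLeast {j : ℕ | 1 ≤ j ∧ Real.sqrt n ≤ 3 ^ j} k)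
    (m r s : ℕ) (hr : 1 ≤ r) (hs : 1 ≤ s) (hm : m = 2 ^ r * 3 ^ s)
    (hm1 : Real.sqrt n < m) (hm2 : m < 3 ^ k) :
    ∃ a b : ℕ, 1 ≤ a ∧ a < b ∧ b ≤ n ∧ b ^ 3 + b ≡ a ^ 3 + a [MOD m ^ 2] :=
  collision_case_iii_general n k hk m r s hs hm hm2
end

section
/- Let n ≥ 64 and let k = min{ j ∈ ℤ⁺ : 3^j ≥ √n }. Suppose m satisfies √n < m < 3^k and m = 2^r for some positive integer r. Then there exist integers 1 ≤ a < b ≤ n such that b³ + b ≡ a³ + a (mod m²). -/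
/-!
With `f x = x³ + x` one has `f (u + 2) - f (u - 2) = 4 (3u² + 5)`, so it suffices to find a
`u ≥ 3` with `2^(2r-2) ∣ 3u² + 5` and `u + 2 ≤ n`. Since `3 + 5 ≡ 0 mod 8`, the root `u = 1`
lifts to roots modulo every power of two; replacing a root `u` by `-u` we may keep it below
`2^(2r-4) = m² / 16`, and `m < 3^k ≤ 3√n` gives `m² / 16 < 9n / 16`.
-/

/-- Hensel lifting at the prime `2`: a root `u` modulo `2^(s+3)` either is a root modulo
`2^(s+4)` or `2^(s+2) - u` is. -/
theorem exists_odd_lt_two_pow_dvd_mul_sq_add (A B : ℤ) (hA : Odd A) (hAB : 8 ∣ A + B) (s : ℕ) :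
    ∃ u : ℕ, Odd u ∧ u < 2 ^ (s + 1) ∧ (2 : ℤ) ^ (s + 3) ∣ A * u ^ 2 + B := by
  induction s with
  | zero => exact ⟨1, odd_one, by norm_num, by simpa using hAB⟩
  | succ s ih =>
    obtain ⟨u, hu, hlt, c, hc⟩ := ih
    have hlt' : u < 2 ^ (s + 2) := hlt.trans (Nat.pow_lt_pow_right one_lt_two (by omega))
    rcases Int.even_or_odd c with ⟨d, hd⟩ | hc_odd
    · exact ⟨u, hu, hlt', d, by rw [hc, hd]; ring⟩
    · obtain ⟨e, he⟩ : Even (c - A * u) := hc_odd.sub_odd (hA.mul hu.natCast)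
      refine ⟨2 ^ (s + 2) - u, ?_, Nat.sub_lt (by positivity) hu.pos, e + A * 2 ^ s, ?_⟩
      · exact Nat.Even.sub_odd hlt'.le ((Nat.even_pow' (by omega)).mpr even_two) hu
      · push_cast [hlt'.le]
        linear_combination hc + 2 ^ (s + 3) * he

theorem cube_add_self_modEq_of_dvd {M a : ℕ} (h : M ∣ 4 * (3 * (a + 2) ^ 2 + 5)) :
    (a + 4) ^ 3 + (a + 4) ≡ a ^ 3 + a [MOD M] := by
  refine (Nat.modEq_iff_dvd.mpr ?_).symm
  have hdiff : ((a + 4) ^ 3 + (a + 4) : ℤ) - (a ^ 3 + a) = 4 * (3 * (a + 2) ^ 2 + 5) := by ring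
  push_cast
  rw [hdiff]
  exact_mod_cast h

theorem three_pow_lt_three_mul_of_isLeast {x : ℝ} {k : ℕ} (hx : 3 < x)
    (hk : IsLeast {j : ℕ | 1 ≤ j ∧ x ≤ 3 ^ j} k) : (3 : ℝ) ^ k < 3 * x := by
  obtain ⟨⟨hk1, hxk⟩, hmin⟩ := hk
  obtain ⟨j, rfl⟩ : ∃ j, k = j + 1 := ⟨k - 1, by omega⟩
  have hj : 1 ≤ j := by
    rcases j with _ | j
    · linarith [show x ≤ 3 by simpa using hxk]
    · omega
  have hxj : (3 : ℝ) ^ j < x := by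
    by_contra! h
    exact absurd (hmin ⟨hj, h⟩) (by omega)
  rw [pow_succ]
  linarith

theorem collision_case_ii_general (n : ℕ) (hn : 64 ≤ n) (k : ℕ)
    (hk : IsLeast {j : ℕ | 1 ≤ j ∧ Real.sqrt n ≤ 3 ^ j} k)
    (m r : ℕ) (hm : m = 2 ^ r)
    (hm1 : Real.sqrt n < m) (hm2 : m < 3 ^ k) :
    ∃ a b : ℕ, 1 ≤ a ∧ a < b ∧ b ≤ n ∧ b ^ 3 + b ≡ a ^ 3 + a [MOD m ^ 2] := by
  have hsqrt : (8 : ℝ) ≤ √n := Real.le_sqrt_of_sq_le (by exact_mod_cast (by omega : 8 ^ 2 ≤ n))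
  have hm_sq : m ^ 2 < 9 * n := by
    have h3k := three_pow_lt_three_mul_of_isLeast (by linarith) hk
    have hm3 : (m : ℝ) < 3 ^ k := by exact_mod_cast hm2
    have : (m : ℝ) ^ 2 < 9 * n := by
      nlinarith [Real.sq_sqrt n.cast_nonneg, m.cast_nonneg (α := ℝ)]
    exact_mod_cast this
  obtain ⟨t, rfl⟩ : ∃ t, r = t + 3 := by
    have h8m : 2 ^ 3 < 2 ^ r := by rw [← hm]; exact_mod_cast hsqrt.trans_lt hm1
    exact ⟨r - 3, by have := (Nat.pow_lt_pow_iff_right one_lt_two).mp h8m; omega⟩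
  obtain ⟨u, hu, hlt, hdvd⟩ :=
    exists_odd_lt_two_pow_dvd_mul_sq_add 3 5 (by decide) (by decide) (2 * t + 1)
  have hlt : u < 2 ^ (2 * t + 2) := hlt
  have hdvd : 2 ^ (2 * t + 4) ∣ 3 * u ^ 2 + 5 := by exact_mod_cast hdvd
  have hu3 : 3 ≤ u := by
    have h16 : 16 ∣ 3 * u ^ 2 + 5 := (pow_dvd_pow 2 (by omega : 4 ≤ 2 * t + 4)).trans hdvd
    obtain ⟨_ | v, rfl⟩ := hu
    · norm_num at h16
    · omega
  have hm_sq_eq : m ^ 2 = 16 * 2 ^ (2 * t + 2) := by subst hm; ring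
  obtain ⟨a, rfl⟩ : ∃ a, u = a + 2 := ⟨u - 2, by omega⟩
  refine ⟨a, a + 4, by omega, by omega, by omega, cube_add_self_modEq_of_dvd ?_⟩
  rw [show m ^ 2 = 4 * 2 ^ (2 * t + 4) by subst hm; ring]
  exact Nat.mul_dvd_mul_left 4 hdvd

/-- Case (ii): `n ≥ 64`, `√n < m < 3^k`, and `m = 2^r` for some `r ≥ 1`.  Then there
exist `1 ≤ a < b ≤ n` with `b³ + b ≡ a³ + a (mod m²)`. -/
theorem collision_case_ii (n : ℕ) (hn : 64 ≤ n) (k : ℕ)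
    (hk : IsLeast {j : ℕ | 1 ≤ j ∧ Real.sqrt n ≤ 3 ^ j} k)
    (m r : ℕ) (hr : 1 ≤ r) (hm : m = 2 ^ r)
    (hm1 : Real.sqrt n < m) (hm2 : m < 3 ^ k) :
    ∃ a b : ℕ, 1 ≤ a ∧ a < b ∧ b ≤ n ∧ b ^ 3 + b ≡ a ^ 3 + a [MOD m ^ 2] :=
  collision_case_ii_general n hn k hk m r hm hm1 hm2
end
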